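/- arXiv:2512.21935 — 8 statements merged into one kernel-verified Lean document; each statement's English description precedes it below -/
import Mathlib

section
/- Let G be a simple graph on n vertices with adjacency matrix A, and let θ ∈ ℝ^n be a second-order stationary point of the Kuramoto energy E_G(θ) = (1/2)·Σ_{i,j} A_{ij}(1 − cos(θ_i − θ_j)), i.e., the gradient of E_G vanishes at θ and the Hessian of E_G at θ is positive semidefinite. Then for every vertex i, either Σ_{j ∈ N(i)} v_j = 0, or Σ_{j ∈ N(i)} v_j = μ v_i for some real μ > 0, where v_k = (cos θ_k, sin θ_k) is the phasor of vertex k. Equivalently, there exists μ_i ≥ 0 with Σ_{j ∈ N(i)} v_j = μ_i v_i. -/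
open Finset

/-- The phasor of vertex `i` at state `θ`: the unit vector `(cos θᵢ, sin θᵢ) ∈ ℝ²`. -/
noncomputable def phasor {V : Type*} (θ : V → ℝ) (i : V) : ℝ × ℝ :=
  (Real.cos (θ i), Real.sin (θ i))

/-- The Kuramoto energy `E_G(θ) = (1/2)·Σ_{i,j} A_{ij}(1 − cos(θ_i − θ_j))`. -/
noncomputable def kuramotoEnergy {V : Type*} [Fintype V] (G : SimpleGraph V)
    [DecidableRel G.Adj] (θ : V → ℝ) : ℝ :=
  (1 / 2) * ∑ i, ∑ j, (if G.Adj i j then (1 : ℝ) else 0) * (1 - Real.cos (θ i - θ j))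

/-- The Hessian of the Kuramoto energy at `θ`: off-diagonal entries
`−A_{ij} cos(θ_i − θ_j)` and diagonal entries `Σ_{k ≠ i} A_{ik} cos(θ_i − θ_k)`. -/
noncomputable def kuramotoHessian {V : Type*} [Fintype V] [DecidableEq V] (G : SimpleGraph V)
    [DecidableRel G.Adj] (θ : V → ℝ) : Matrix V V ℝ :=
  Matrix.of fun i j =>
    if i = j then ∑ k ∈ Finset.univ.erase i, (if G.Adj i k then Real.cos (θ i - θ k) else 0)
    else -(if G.Adj i j then Real.cos (θ i - θ j) else 0)

/-- `θ` is a second-order stationary point of the Kuramoto energy: the gradient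
`(∇E_G(θ))_i = Σ_j A_{ij} sin(θ_i − θ_j)` vanishes and the Hessian is positive
semidefinite. -/
def IsSOSP {V : Type*} [Fintype V] [DecidableEq V] (G : SimpleGraph V)
    [DecidableRel G.Adj] (θ : V → ℝ) : Prop :=
  (∀ i, ∑ j, (if G.Adj i j then (1 : ℝ) else 0) * Real.sin (θ i - θ j) = 0) ∧
  (kuramotoHessian G θ).PosSemidef

/-!
At a critical point the neighbour sines `Σ_{j ∈ N(i)} sin(θᵢ − θⱼ)` vanish, and the `i`-th diagonal
entry of the positive semidefinite Hessian is `Σ_{j ∈ N(i)} cos(θᵢ − θⱼ) ≥ 0`. Writing each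
neighbour phasor in the orthonormal frame `vᵢ, (sin θᵢ, −cos θᵢ)` shows that these two sums are exactly the
coordinates of `Σ_{j ∈ N(i)} vⱼ` in that frame.
-/

section Kuramoto

variable {V : Type*}

lemma phasor_eq_cos_smul_add_sin_smul (θ : V → ℝ) (i j : V) :
    phasor θ j = Real.cos (θ i - θ j) • phasor θ i
      + Real.sin (θ i - θ j) • (Real.sin (θ i), -Real.cos (θ i)) := by
  simp only [phasor, Real.cos_sub, Real.sin_sub, Prod.smul_mk, Prod.mk_add_mk, smul_eq_mul,
    Prod.mk.injEq]
  constructor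
  · linear_combination -Real.cos (θ j) * Real.sin_sq_add_cos_sq (θ i)
  · linear_combination -Real.sin (θ j) * Real.sin_sq_add_cos_sq (θ i)

variable [Fintype V] (G : SimpleGraph V) [DecidableRel G.Adj] (θ : V → ℝ)

lemma sum_adj_mul_eq_sum_neighborFinset (f : V → ℝ) (i : V) :
    ∑ j, (if G.Adj i j then (1 : ℝ) else 0) * f j = ∑ j ∈ G.neighborFinset i, f j := by
  simp only [SimpleGraph.neighborFinset_eq_filter, sum_filter, ite_mul, one_mul, zero_mul]

lemma kuramotoHessian_apply_self [DecidableEq V] (i : V) :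
    kuramotoHessian G θ i i = ∑ j ∈ G.neighborFinset i, Real.cos (θ i - θ j) := by
  simp only [kuramotoHessian, Matrix.of_apply, if_true,
    SimpleGraph.neighborFinset_eq_filter, sum_filter]
  rw [sum_erase _ (by simp)]

lemma sum_neighborFinset_phasor (i : V) :
    ∑ j ∈ G.neighborFinset i, phasor θ j
      = (∑ j ∈ G.neighborFinset i, Real.cos (θ i - θ j)) • phasor θ i
        + (∑ j ∈ G.neighborFinset i, Real.sin (θ i - θ j)) • (Real.sin (θ i), -Real.cos (θ i)) := by
  simp only [sum_smul, ← sum_add_distrib, ← phasor_eq_cos_smul_add_sin_smul]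

theorem IsSOSP.sum_neighborFinset_phasor_eq [DecidableEq V] (hθ : IsSOSP G θ) (i : V) :
    ∑ j ∈ G.neighborFinset i, phasor θ j
      = (∑ j ∈ G.neighborFinset i, Real.cos (θ i - θ j)) • phasor θ i := by
  have hsin : ∑ j ∈ G.neighborFinset i, Real.sin (θ i - θ j) = 0 := by
    rw [← sum_adj_mul_eq_sum_neighborFinset]
    exact hθ.1 i
  rw [sum_neighborFinset_phasor, hsin, zero_smul, add_zero]

theorem IsSOSP.sum_neighborFinset_cos_nonneg [DecidableEq V] (hθ : IsSOSP G θ) (i : V) :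
    0 ≤ ∑ j ∈ G.neighborFinset i, Real.cos (θ i - θ j) :=
  kuramotoHessian_apply_self G θ i ▸ hθ.2.diag_nonneg

end Kuramoto

/-- If `θ` is a second-order stationary point of the Kuramoto energy, then for every
vertex `i` there exists `μᵢ ≥ 0` with `Σ_{j ∈ N(i)} v_j = μᵢ v_i`; equivalently, either
the neighbour phasor sum vanishes or it is a strictly positive multiple of `v_i`. -/
theorem stmt_1 {n : ℕ} (G : SimpleGraph (Fin n)) [DecidableRel G.Adj] (θ : Fin n → ℝ)
    (hθ : IsSOSP G θ) :
    ∀ i, ∃ μ : ℝ, 0 ≤ μ ∧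
      ∑ j ∈ G.neighborFinset i, phasor θ j = μ • phasor θ i :=
  fun i => ⟨_, hθ.sum_neighborFinset_cos_nonneg G θ i, hθ.sum_neighborFinset_phasor_eq G θ i⟩
end

section
/- (Geometric Closed Twins Lemma.) Let v_a, v_b ∈ ℝ² be unit vectors, let μ_a, μ_b ∈ ℝ, and let q ∈ ℝ² be a vector satisfying v_b + q = μ_a v_a and v_a + q = μ_b v_b. Then one of the following holds: (1) v_a = v_b and μ_a = μ_b; (2) v_a = −v_b, μ_a + μ_b = −2, and μ_a ≠ −1; (3) μ_a = μ_b = −1 and v_a + v_b + q = 0. -/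
/-- **Geometric Closed Twins Lemma.** Let `v_a, v_b ∈ ℝ²` be unit vectors, `μ_a, μ_b ∈ ℝ`,
and `q ∈ ℝ²` with `v_b + q = μ_a v_a` and `v_a + q = μ_b v_b`. Then one of the following
holds: (1) `v_a = v_b` and `μ_a = μ_b`; (2) `v_a = −v_b`, `μ_a + μ_b = −2` and `μ_a ≠ −1`;
(3) `μ_a = μ_b = −1` and `v_a + v_b + q = 0`. -/
theorem stmt_4 (va vb q : EuclideanSpace ℝ (Fin 2)) (μa μb : ℝ)
    (hva : ‖va‖ = 1) (hvb : ‖vb‖ = 1)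
    (hqa : vb + q = μa • va) (hqb : va + q = μb • vb) :
    (va = vb ∧ μa = μb) ∨
    (va = -vb ∧ μa + μb = -2 ∧ μa ≠ -1) ∨
    (μa = -1 ∧ μb = -1 ∧ va + vb + q = 0) := by
  have hvb0 : vb ≠ 0 := by intro h; rw [h, norm_zero] at hvb; norm_num at hvb
  have key : (1 + μa) • va = (1 + μb) • vb := by
    linear_combination (norm := module) hqb - hqa
  by_cases hμa : μa = -1
  · -- case μa = -1
    subst hμa
    have h0 : (1 + μb) • vb = 0 := by
      rw [← key]; norm_num
    rcases smul_eq_zero.mp h0 with h | h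
    · have hμb : μb = -1 := by linarith
      subst hμb
      refine Or.inr (Or.inr ⟨rfl, rfl, ?_⟩)
      have : vb + q = -va := by rw [hqa]; module
      linear_combination (norm := module) this
    · exact absurd h hvb0
  · have hne : (1 : ℝ) + μa ≠ 0 := by intro h; exact hμa (by linarith)
    have habs : |1 + μa| = |1 + μb| := by
      have := congrArg norm key
      rwa [norm_smul, norm_smul, hva, hvb, Real.norm_eq_abs, Real.norm_eq_abs,
        mul_one, mul_one] at this
    rcases abs_eq_abs.mp habs with h | h
    · -- 1+μa = 1+μb
      have hμ : μa = μb := by linarith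
      left
      refine ⟨?_, hμ⟩
      subst hμ
      exact smul_right_injective _ hne key
    · -- 1+μa = -(1+μb)
      right; left
      have hsum : μa + μb = -2 := by linarith
      refine ⟨?_, hsum, hμa⟩
      apply smul_right_injective (EuclideanSpace ℝ (Fin 2)) hne
      show (1 + μa) • va = (1 + μa) • (-vb)
      rw [key, smul_neg, ← neg_smul]
      congr 1
      linarith
end

section
/- Let G be a simple graph and θ a state of the Kuramoto model on G. Suppose a and b are adjacent structural closed twins, i.e., ab is an edge and N(a) \ {b} = N(b) \ {a}, and suppose both a and b attain stable equilibrium at θ, meaning there exist μ_a ≥ 0 and μ_b ≥ 0 with Σ_{j ∈ N(a)} v_j = μ_a v_a and Σ_{j ∈ N(b)} v_j = μ_b v_b, where v_k = (cos θ_k, sin θ_k). Then a and b synchronize: v_a = v_b (equivalently θ_a ≡ θ_b modulo 2π), and μ_a = μ_b. -/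
open Finset

/-- Adjacent structural closed twins (`ab ∈ E` and `N(a) \ {b} = N(b) \ {a}`) that both
attain stable equilibrium at `θ` synchronize: `v_a = v_b` and `μ_a = μ_b`. -/
theorem stmt_5 {n : ℕ} (G : SimpleGraph (Fin n)) [DecidableRel G.Adj] (θ : Fin n → ℝ)
    (a b : Fin n) (hab : G.Adj a b)
    (htwin : G.neighborFinset a \ {b} = G.neighborFinset b \ {a})
    (μa μb : ℝ) (hμa : 0 ≤ μa) (hμb : 0 ≤ μb)
    (ha : ∑ j ∈ G.neighborFinset a, phasor θ j = μa • phasor θ a)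
    (hb : ∑ j ∈ G.neighborFinset b, phasor θ j = μb • phasor θ b) :
    phasor θ a = phasor θ b ∧ μa = μb := by
  have hbA : b ∈ G.neighborFinset a := by
    rw [SimpleGraph.mem_neighborFinset]; exact hab
  have haB : a ∈ G.neighborFinset b := by
    rw [SimpleGraph.mem_neighborFinset]; exact hab.symm
  have hsa : phasor θ b + ∑ j ∈ (G.neighborFinset a).erase b, phasor θ j
      = μa • phasor θ a := by rw [Finset.add_sum_erase _ _ hbA]; exact ha
  have hsb : phasor θ a + ∑ j ∈ (G.neighborFinset b).erase a, phasor θ j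
      = μb • phasor θ b := by rw [Finset.add_sum_erase _ _ haB]; exact hb
  have herase : (G.neighborFinset a).erase b = (G.neighborFinset b).erase a := by
    rw [← Finset.sdiff_singleton_eq_erase, ← Finset.sdiff_singleton_eq_erase]
    exact htwin
  rw [herase] at hsa
  have key : (μa + 1) • phasor θ a = (μb + 1) • phasor θ b := by
    have h2 : μa • phasor θ a + phasor θ a = μb • phasor θ b + phasor θ b := by
      rw [← hsa, ← hsb]; abel
    have e1 : (μa + 1) • phasor θ a = μa • phasor θ a + phasor θ a := by
      rw [add_smul, one_smul]
    have e2 : (μb + 1) • phasor θ b = μb • phasor θ b + phasor θ b := by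
      rw [add_smul, one_smul]
    rw [e1, e2, h2]
  have hc : (μa + 1) * Real.cos (θ a) = (μb + 1) * Real.cos (θ b) :=
    congrArg Prod.fst key
  have hs : (μa + 1) * Real.sin (θ a) = (μb + 1) * Real.sin (θ b) :=
    congrArg Prod.snd key
  have pa : Real.sin (θ a) ^ 2 + Real.cos (θ a) ^ 2 = 1 := Real.sin_sq_add_cos_sq _
  have pb : Real.sin (θ b) ^ 2 + Real.cos (θ b) ^ 2 = 1 := Real.sin_sq_add_cos_sq _
  have h1 : ((μa + 1) * Real.cos (θ a)) ^ 2 = ((μb + 1) * Real.cos (θ b)) ^ 2 := by rw [hc]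
  have h2' : ((μa + 1) * Real.sin (θ a)) ^ 2 = ((μb + 1) * Real.sin (θ b)) ^ 2 := by rw [hs]
  have hsq : (μa + 1) ^ 2 = (μb + 1) ^ 2 := by
    linear_combination h1 + h2' - (μa + 1) ^ 2 * pa + (μb + 1) ^ 2 * pb
  have hμ : μa = μb := by nlinarith [hsq, hμa, hμb]
  refine ⟨?_, hμ⟩
  have hpos : (0 : ℝ) < μa + 1 := by linarith
  have := key
  rw [hμ] at this
  exact smul_right_injective (ℝ × ℝ) (by rw [← hμ]; exact ne_of_gt hpos) this
end

section
/- Let G be a simple graph and θ a state of the Kuramoto model on G. Suppose a and b are non-adjacent structural open twins, i.e., ab is not an edge and N(a) = N(b), and suppose both a and b attain stable equilibrium at θ, meaning there exist μ_a ≥ 0 and μ_b ≥ 0 with Σ_{j ∈ N(a)} v_j = μ_a v_a and Σ_{j ∈ N(b)} v_j = μ_b v_b, where v_k = (cos θ_k, sin θ_k). Then either v_a = v_b with μ_a = μ_b > 0, or μ_a = μ_b = 0 and Σ_{j ∈ N(a)} v_j = 0. -/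
open Finset

/-- Non-adjacent structural open twins (`ab ∉ E` and `N(a) = N(b)`) that both attain
stable equilibrium at `θ` either synchronize with equal positive strengths, or both
strengths vanish and the common neighbour phasor sum is zero. -/
theorem stmt_6 {n : ℕ} (G : SimpleGraph (Fin n)) [DecidableRel G.Adj] (θ : Fin n → ℝ)
    (a b : Fin n) (hne : a ≠ b) (hab : ¬ G.Adj a b)
    (htwin : G.neighborFinset a = G.neighborFinset b)
    (μa μb : ℝ) (hμa : 0 ≤ μa) (hμb : 0 ≤ μb)
    (ha : ∑ j ∈ G.neighborFinset a, phasor θ j = μa • phasor θ a)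
    (hb : ∑ j ∈ G.neighborFinset b, phasor θ j = μb • phasor θ b) :
    (phasor θ a = phasor θ b ∧ μa = μb ∧ 0 < μa) ∨
    (μa = 0 ∧ μb = 0 ∧ ∑ j ∈ G.neighborFinset a, phasor θ j = 0) := by
  have heq : μa • phasor θ a = μb • phasor θ b := by rw [← ha, ← hb, htwin]
  have h1 : μa * Real.cos (θ a) = μb * Real.cos (θ b) := congrArg Prod.fst heq
  have h2 : μa * Real.sin (θ a) = μb * Real.sin (θ b) := congrArg Prod.snd heq
  have hsq : μa ^ 2 = μb ^ 2 := by
    have ca := Real.sin_sq_add_cos_sq (θ a)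
    have cb := Real.sin_sq_add_cos_sq (θ b)
    have e1 := congrArg (· ^ 2) h1
    have e2 := congrArg (· ^ 2) h2
    nlinarith [ca, cb, e1, e2]
  have hμ : μa = μb := by nlinarith
  rcases eq_or_lt_of_le hμa with h0 | hpos
  · right
    refine ⟨h0.symm, by rw [← hμ, ← h0], ?_⟩
    rw [ha, ← h0, zero_smul]
  · left
    refine ⟨?_, hμ, hpos⟩
    have hμne : μa ≠ 0 := ne_of_gt hpos
    unfold phasor
    rw [← hμ] at h1 h2
    exact Prod.ext (mul_left_cancel₀ hμne h1) (mul_left_cancel₀ hμne h2)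
end

section
/- Every connected complete split graph is globally synchronizing: if G is a graph whose vertex set is partitioned into a nonempty clique C and an independent set I, where every vertex of C is adjacent to every other vertex of C and to every vertex of I, and no two vertices of I are adjacent, then every second-order stationary point θ of the Kuramoto energy E_G(θ) = (1/2)·Σ_{i,j} A_{ij}(1 − cos(θ_i − θ_j)) is a synchronized state, i.e., all phasors v_i = (cos θ_i, sin θ_i) are equal. -/
open Finset

/-!
Write `zᵢ = e^{iθᵢ}` and `wᵢ = Σ_{j ~ i} z_j`. The gradient and the Hessian diagonal at `i` are
the imaginary and real parts of `zᵢ · conj wᵢ`, so at a second-order stationary point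
`zᵢ · conj wᵢ ≥ 0` in `ℂ`: every `zᵢ` is the direction of its nonzero field `wᵢ`. A clique vertex
`c` has `w_c = S - z_c` with `S = Σ_j z_j`, hence `z_c · conj S = z_c · conj w_c + 1 ≥ 1`, and all
clique phasors equal `S / ‖S‖`. A vertex outside the clique is adjacent exactly to the clique,
so its field is a positive multiple of `S / ‖S‖` and its phasor is `S / ‖S‖` as well.
-/

section

open ComplexConjugate
open scoped ComplexOrder

lemma Complex.eq_div_norm_of_zero_le_mul_conj {z w : ℂ} (hz : ‖z‖ = 1) (hw : w ≠ 0)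
    (h : 0 ≤ z * conj w) : z = w / ‖w‖ := by
  have hzw : z * conj w = ‖w‖ := by
    rw [Complex.eq_coe_norm_of_nonneg h, norm_mul, Complex.norm_conj, hz, one_mul]
  have hnorm : (‖w‖ : ℂ) ≠ 0 := by exact_mod_cast norm_ne_zero_iff.2 hw
  rw [eq_div_iff hnorm]
  refine mul_left_cancel₀ hnorm ?_
  linear_combination w * hzw - z * RCLike.conj_mul w

section Phasor

variable {V : Type*} (θ : V → ℝ)

noncomputable def complexPhasor (i : V) : ℂ := Complex.exp (θ i * Complex.I)

variable {θ}

lemma norm_complexPhasor (i : V) : ‖complexPhasor θ i‖ = 1 :=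
  Complex.norm_exp_ofReal_mul_I _

lemma complexPhasor_mul_conj (i j : V) :
    complexPhasor θ i * conj (complexPhasor θ j) = Complex.exp (↑(θ i - θ j) * Complex.I) := by
  rw [complexPhasor, complexPhasor, ← Complex.exp_conj, ← Complex.exp_add]
  simp only [map_mul, Complex.conj_ofReal, Complex.conj_I]
  push_cast
  ring_nf

lemma phasor_eq_of_complexPhasor_eq {i j : V} (h : complexPhasor θ i = complexPhasor θ j) :
    phasor θ i = phasor θ j := by
  have hre := congrArg Complex.re h
  have him := congrArg Complex.im h
  simp only [complexPhasor, Complex.exp_ofReal_mul_I_re, Complex.exp_ofReal_mul_I_im] at hre him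
  simp only [phasor, hre, him]

end Phasor

variable {V : Type*} [Fintype V] (G : SimpleGraph V) [DecidableRel G.Adj] (θ : V → ℝ)

noncomputable def localField (i : V) : ℂ := ∑ j ∈ G.neighborFinset i, complexPhasor θ j

variable {G θ}

lemma complexPhasor_mul_conj_localField (i : V) :
    complexPhasor θ i * conj (localField G θ i) =
      ∑ j ∈ G.neighborFinset i, Complex.exp (↑(θ i - θ j) * Complex.I) := by
  simp only [localField, map_sum, mul_sum, complexPhasor_mul_conj]

lemma sum_adj_eq_sum_neighborFinset {M : Type*} [AddCommMonoid M] (i : V) (f : V → M) :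
    ∑ j, (if G.Adj i j then f j else 0) = ∑ j ∈ G.neighborFinset i, f j := by
  rw [← sum_filter, G.neighborFinset_eq_filter]

lemma sum_adj_mul_sin_eq_im (i : V) :
    ∑ j, (if G.Adj i j then (1 : ℝ) else 0) * Real.sin (θ i - θ j) =
      (complexPhasor θ i * conj (localField G θ i)).im := by
  simp only [boole_mul, sum_adj_eq_sum_neighborFinset, complexPhasor_mul_conj_localField,
    Complex.im_sum, Complex.exp_ofReal_mul_I_im]

lemma kuramotoHessian_apply_self_s8 [DecidableEq V] (i : V) :
    kuramotoHessian G θ i i = (complexPhasor θ i * conj (localField G θ i)).re := by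
  rw [kuramotoHessian, Matrix.of_apply, if_pos rfl,
    sum_erase univ (f := fun k => if G.Adj i k then Real.cos (θ i - θ k) else 0)
      (if_neg G.irrefl),
    sum_adj_eq_sum_neighborFinset, complexPhasor_mul_conj_localField, Complex.re_sum]
  simp only [Complex.exp_ofReal_mul_I_re]

lemma IsSOSP.zero_le_complexPhasor_mul_conj_localField [DecidableEq V] (h : IsSOSP G θ)
    (i : V) : 0 ≤ complexPhasor θ i * conj (localField G θ i) := by
  rw [Complex.nonneg_iff, ← kuramotoHessian_apply_self_s8, ← sum_adj_mul_sin_eq_im]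
  exact ⟨h.2.diag_nonneg, (h.1 i).symm⟩

lemma IsSOSP.complexPhasor_eq_of_forall_adj [DecidableEq V] (h : IsSOSP G θ) {c : V}
    (hc : ∀ j ≠ c, G.Adj c j) :
    complexPhasor θ c = (∑ j, complexPhasor θ j) / ‖∑ j, complexPhasor θ j‖ := by
  set S := ∑ j, complexPhasor θ j
  have hneighbors : G.neighborFinset c = univ.erase c := by
    ext j
    simpa [SimpleGraph.mem_neighborFinset] using ⟨fun h => h.ne.symm, hc j⟩
  have hfield : localField G θ c = S - complexPhasor θ c := by
    rw [localField, hneighbors, sum_erase_eq_sub (mem_univ c)]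
  have hpos : 0 < complexPhasor θ c * conj S := by
    have hshift : complexPhasor θ c * conj S =
        complexPhasor θ c * conj (localField G θ c) + 1 := by
      rw [hfield, map_sub, mul_sub, Complex.mul_conj', norm_complexPhasor]
      push_cast
      ring
    rw [hshift]
    exact add_pos_of_nonneg_of_pos (h.zero_le_complexPhasor_mul_conj_localField c) one_pos
  have hS : S ≠ 0 := by
    rintro hS
    rw [hS, map_zero, mul_zero] at hpos
    exact hpos.false
  exact Complex.eq_div_norm_of_zero_le_mul_conj (norm_complexPhasor c) hS hpos.le

lemma IsSOSP.complexPhasor_eq_of_neighbors_eq [DecidableEq V] (h : IsSOSP G θ) {i : V}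
    {u : ℂ} (hne : (G.neighborFinset i).Nonempty)
    (hu : ∀ j ∈ G.neighborFinset i, complexPhasor θ j = u) : complexPhasor θ i = u := by
  obtain ⟨j₀, hj₀⟩ := hne
  have hnorm : ‖u‖ = 1 := hu j₀ hj₀ ▸ norm_complexPhasor j₀
  have hdeg : (G.degree i : ℂ) ≠ 0 := by
    rw [← G.card_neighborFinset_eq_degree]
    exact_mod_cast card_ne_zero_of_mem hj₀
  have hfield : localField G θ i = G.degree i * u := by
    rw [localField, sum_congr rfl hu, sum_const, G.card_neighborFinset_eq_degree, nsmul_eq_mul]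
  have hfield_ne : localField G θ i ≠ 0 := by
    rw [hfield]
    exact mul_ne_zero hdeg (norm_ne_zero_iff.1 (hnorm ▸ one_ne_zero))
  rw [Complex.eq_div_norm_of_zero_le_mul_conj (norm_complexPhasor i) hfield_ne
    (h.zero_le_complexPhasor_mul_conj_localField i), hfield, norm_mul, hnorm, Complex.norm_natCast]
  push_cast
  field_simp

end

theorem stmt_8_general {V : Type*} [Fintype V] [DecidableEq V] (G : SimpleGraph V)
    [DecidableRel G.Adj] (C : Set V)
    (hC : C.Nonempty)
    (hadj : ∀ a b, G.Adj a b ↔ a ≠ b ∧ (a ∈ C ∨ b ∈ C))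
    (θ : V → ℝ) (hθ : IsSOSP G θ) :
    ∀ i j, phasor θ i = phasor θ j := by
  obtain ⟨c₀, hc₀⟩ := hC
  set u := (∑ j, complexPhasor θ j) / ‖∑ j, complexPhasor θ j‖
  have hclique : ∀ c ∈ C, complexPhasor θ c = u := fun c hc =>
    hθ.complexPhasor_eq_of_forall_adj fun j hj => (hadj c j).2 ⟨hj.symm, .inl hc⟩
  have hall : ∀ i, complexPhasor θ i = u := by
    intro i
    by_cases hi : i ∈ C
    · exact hclique i hi
    refine hθ.complexPhasor_eq_of_neighbors_eq ⟨c₀, ?_⟩ fun j hj => hclique j ?_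
    · rw [SimpleGraph.mem_neighborFinset, hadj]
      exact ⟨fun h => hi (h ▸ hc₀), .inr hc₀⟩
    · rw [SimpleGraph.mem_neighborFinset, hadj] at hj
      exact hj.2.resolve_left hi
  exact fun i j => phasor_eq_of_complexPhasor_eq ((hall i).trans (hall j).symm)

/-- Every connected complete split graph is globally synchronizing: if the vertex set of
`G` is partitioned into a nonempty clique `C` and an independent set `I`, with every
vertex of `C` adjacent to every other vertex of `C` and to every vertex of `I`, and no
two vertices of `I` adjacent, then every second-order stationary point `θ` of the
Kuramoto energy is a synchronized state (all phasors coincide). -/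
theorem stmt_8 {V : Type*} [Fintype V] [DecidableEq V] (G : SimpleGraph V)
    [DecidableRel G.Adj] (C I : Set V)
    (hC : C.Nonempty) (hdisj : Disjoint C I) (hcover : C ∪ I = Set.univ)
    (hadj : ∀ a b, G.Adj a b ↔ a ≠ b ∧ (a ∈ C ∨ b ∈ C))
    (θ : V → ℝ) (hθ : IsSOSP G θ) :
    ∀ i j, phasor θ i = phasor θ j :=
  stmt_8_general G C hC hadj θ hθ
end

section
/- (Benign extra neighbours.) Let G be a simple graph, θ ∈ ℝ^n a state, and let A, B be adjacent vertices such that N(A) \ {B} = S ⊎ T and N(B) \ {A} = S for disjoint vertex sets S and T not containing A or B. Suppose both A and B attain stable equilibrium at θ: there exist μ_A ≥ 0 and μ_B ≥ 0 with Σ_{j ∈ N(A)} v_j = μ_A v_A and Σ_{j ∈ N(B)} v_j = μ_B v_B, where v_k = (cos θ_k, sin θ_k). If v_i = v_B for every i ∈ T, then A and B synchronize: v_A = v_B. -/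
/-
Subtracting the two equilibrium equations cancels the common neighbours `S` and, since every
vertex of `T` contributes `v_B`, leaves `(μ_A + 1) v_A = (μ_B + |T| + 1) v_B`. Both coefficients
are positive and both phasors are unit vectors, so the coefficients agree and `v_A = v_B`.
-/

open Finset

theorem phasor_fst_sq_add_snd_sq {V : Type*} (θ : V → ℝ) (i : V) :
    (phasor θ i).1 ^ 2 + (phasor θ i).2 ^ 2 = 1 :=
  Real.cos_sq_add_sin_sq (θ i)

theorem phasor_eq_of_smul_eq_smul {V : Type*} (θ : V → ℝ) {i j : V} {a b : ℝ}
    (ha : 0 < a) (hb : 0 < b) (h : a • phasor θ i = b • phasor θ j) :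
    phasor θ i = phasor θ j := by
  have h₁ : a * (phasor θ i).1 = b * (phasor θ j).1 := congrArg Prod.fst h
  have h₂ : a * (phasor θ i).2 = b * (phasor θ j).2 := congrArg Prod.snd h
  have hsq : a ^ 2 = b ^ 2 := by
    linear_combination (a * (phasor θ i).1 + b * (phasor θ j).1) * h₁
      + (a * (phasor θ i).2 + b * (phasor θ j).2) * h₂
      - a ^ 2 * phasor_fst_sq_add_snd_sq θ i + b ^ 2 * phasor_fst_sq_add_snd_sq θ j
  have hab : a = b := (pow_left_inj₀ ha.le hb.le two_ne_zero).mp hsq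
  subst hab
  exact smul_right_injective _ ha.ne' h

theorem stmt_9_general {n : ℕ} (G : SimpleGraph (Fin n)) [DecidableRel G.Adj] (θ : Fin n → ℝ)
    (A B : Fin n) (hAB : G.Adj A B)
    (S T : Finset (Fin n)) (hST : Disjoint S T)
    (hNA : G.neighborFinset A \ {B} = S ∪ T)
    (hNB : G.neighborFinset B \ {A} = S)
    (μA μB : ℝ) (hμA : 0 ≤ μA) (hμB : 0 ≤ μB)
    (heqA : ∑ j ∈ G.neighborFinset A, phasor θ j = μA • phasor θ A)
    (heqB : ∑ j ∈ G.neighborFinset B, phasor θ j = μB • phasor θ B)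
    (hT : ∀ i ∈ T, phasor θ i = phasor θ B) :
    phasor θ A = phasor θ B := by
  have hsumA : phasor θ B + (∑ j ∈ S, phasor θ j + (T.card : ℝ) • phasor θ B)
      = μA • phasor θ A := by
    rw [← heqA, sum_eq_add_sum_sdiff_singleton_of_mem (G.mem_neighborFinset A B |>.mpr hAB),
      hNA, sum_union hST, sum_congr rfl hT, sum_const, Nat.cast_smul_eq_nsmul]
  have hsumB : phasor θ A + ∑ j ∈ S, phasor θ j = μB • phasor θ B := by
    rw [← heqB, sum_eq_add_sum_sdiff_singleton_of_mem (G.mem_neighborFinset B A |>.mpr hAB.symm),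
      hNB]
  have hscaled : (μA + 1) • phasor θ A = (μB + T.card + 1) • phasor θ B := by
    linear_combination (norm := module) hsumB - hsumA
  exact phasor_eq_of_smul_eq_smul θ (by positivity) (by positivity) hscaled

/-- **Benign extra neighbours.** Let `A, B` be adjacent vertices with
`N(A) \ {B} = S ⊎ T` and `N(B) \ {A} = S` for disjoint sets `S, T` avoiding `A, B`.
If both `A` and `B` attain stable equilibrium at `θ` and `v_i = v_B` for every `i ∈ T`,
then `A` and `B` synchronize: `v_A = v_B`. -/
theorem stmt_9 {n : ℕ} (G : SimpleGraph (Fin n)) [DecidableRel G.Adj] (θ : Fin n → ℝ)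
    (A B : Fin n) (hAB : G.Adj A B)
    (S T : Finset (Fin n)) (hST : Disjoint S T)
    (hA_mem : A ∉ S ∪ T) (hB_mem : B ∉ S ∪ T)
    (hNA : G.neighborFinset A \ {B} = S ∪ T)
    (hNB : G.neighborFinset B \ {A} = S)
    (μA μB : ℝ) (hμA : 0 ≤ μA) (hμB : 0 ≤ μB)
    (heqA : ∑ j ∈ G.neighborFinset A, phasor θ j = μA • phasor θ A)
    (heqB : ∑ j ∈ G.neighborFinset B, phasor θ j = μB • phasor θ B)
    (hT : ∀ i ∈ T, phasor θ i = phasor θ B) :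
    phasor θ A = phasor θ B :=
  stmt_9_general G θ A B hAB S T hST hNA hNB μA μB hμA hμB heqA heqB hT
end

section
/- (Synchronous homogeneous extension.) Let G be a simple graph on n vertices, and let θ ∈ ℝ^n be a second-order stationary point of the Kuramoto energy E_G. Let W = Q ⊎ P be disjoint nonempty vertex subsets such that: (i) every vertex i ∈ Q is adjacent to every vertex of P; (ii) for every i ∈ Q, N(i) \ P ⊆ Q. Suppose all vertices of Q are synchronized, i.e., there is a unit vector v ∈ ℝ² with v_i = v for all i ∈ Q, where v_k = (cos θ_k, sin θ_k). Then Σ_{i ∈ P} v_i is a nonnegative multiple of v: either Σ_{i ∈ P} v_i = 0 or Σ_{i ∈ P} v_i = λ v for some λ > 0. -/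
open Finset

/-!
At a vertex `i ∈ Q` the only neighbours off `Q` are the vertices of `P`, all of them adjacent
to `i`, and vertices of `Q` share the phasor `v`. Hence the gradient condition at `i` says that
`s = Σ_{p ∈ P} v_p` is parallel to `v`, i.e. `s = ⟨v, s⟩ v`. The Hessian is a weighted Laplacian,
so its quadratic form at the indicator vector of `Q` is the weight of the cut between `Q` and its
complement, namely `Σ_{i ∈ Q} Σ_{p ∈ P} cos(θ_i − θ_p) = |Q| ⟨v, s⟩`; positive semidefiniteness
gives `⟨v, s⟩ ≥ 0`.
-/

open Finset Matrix

section WeightedLaplacian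

variable {V : Type*} [Fintype V] [DecidableEq V]

def weightedLaplacian (w : V → V → ℝ) : Matrix V V ℝ :=
  Matrix.of fun i j => if i = j then ∑ k ∈ univ.erase i, w i k else -w i j

def indicatorVec (S : Finset V) : V → ℝ := fun i => if i ∈ S then 1 else 0

lemma weightedLaplacian_mulVec_indicatorVec (w : V → V → ℝ) {S : Finset V} {i : V}
    (hi : i ∈ S) : (weightedLaplacian w *ᵥ indicatorVec S) i = ∑ k ∈ Sᶜ, w i k := by
  have hsub : S.erase i ⊆ univ.erase i := erase_subset_erase i (subset_univ S)
  have hdiff : univ.erase i \ S.erase i = Sᶜ := by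
    ext k; by_cases hk : k = i <;> simp [hk, hi]
  calc (weightedLaplacian w *ᵥ indicatorVec S) i
      = ∑ j ∈ S, weightedLaplacian w i j := by
        simp [Matrix.mulVec, dotProduct, indicatorVec, sum_ite_mem]
    _ = ∑ k ∈ univ.erase i, w i k - ∑ j ∈ S.erase i, w i j := by
        rw [← add_sum_erase S _ hi, sub_eq_add_neg, ← sum_neg_distrib]
        exact congrArg₂ (· + ·) (if_pos rfl)
          (sum_congr rfl fun j hj => if_neg (ne_of_mem_erase hj).symm)
    _ = ∑ k ∈ Sᶜ, w i k := by
        rw [← sum_sdiff hsub, hdiff, add_sub_cancel_right]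

lemma indicatorVec_dotProduct_weightedLaplacian_mulVec (w : V → V → ℝ) (S : Finset V) :
    indicatorVec S ⬝ᵥ (weightedLaplacian w *ᵥ indicatorVec S) = ∑ i ∈ S, ∑ k ∈ Sᶜ, w i k := by
  simp only [dotProduct, indicatorVec, ite_mul, one_mul, zero_mul, sum_ite_mem, univ_inter]
  exact sum_congr rfl fun i hi => weightedLaplacian_mulVec_indicatorVec w hi

end WeightedLaplacian

lemma kuramotoHessian_eq_weightedLaplacian {V : Type*} [Fintype V] [DecidableEq V]
    (G : SimpleGraph V) [DecidableRel G.Adj] (θ : V → ℝ) :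
    kuramotoHessian G θ =
      weightedLaplacian fun i k => if G.Adj i k then Real.cos (θ i - θ k) else 0 :=
  rfl

lemma sum_compl_ite_adj_eq_sum {V : Type*} [Fintype V] [DecidableEq V] (G : SimpleGraph V)
    [DecidableRel G.Adj] {Q P : Finset V} (hdisj : Disjoint Q P) {i : V}
    (hP : ∀ p ∈ P, G.Adj i p) (hQ : G.neighborFinset i \ P ⊆ Q) (f : V → ℝ) :
    ∑ k ∈ Qᶜ, (if G.Adj i k then f k else 0) = ∑ p ∈ P, f p := by
  rw [← sum_congr rfl fun p hp => if_pos (hP p hp)]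
  refine (sum_subset (fun p hp => mem_compl.2 (disjoint_right.1 hdisj hp)) ?_).symm
  intro k hkQ hkP
  have hk : ¬G.Adj i k := fun hadj =>
    mem_compl.1 hkQ (hQ (mem_sdiff.2 ⟨(G.mem_neighborFinset i k).2 hadj, hkP⟩))
  exact if_neg hk

lemma sum_cos_sub_phasor {V : Type*} (θ : V → ℝ) (P : Finset V) (i : V) :
    ∑ p ∈ P, Real.cos (θ i - θ p) =
      (phasor θ i).1 * (∑ p ∈ P, phasor θ p).1 + (phasor θ i).2 * (∑ p ∈ P, phasor θ p).2 := by
  simp only [Prod.fst_sum, Prod.snd_sum, phasor, Real.cos_sub, mul_sum, sum_add_distrib]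

lemma sum_sin_sub_phasor {V : Type*} (θ : V → ℝ) (P : Finset V) (i : V) :
    ∑ p ∈ P, Real.sin (θ i - θ p) =
      (phasor θ i).2 * (∑ p ∈ P, phasor θ p).1 - (phasor θ i).1 * (∑ p ∈ P, phasor θ p).2 := by
  simp only [Prod.fst_sum, Prod.snd_sum, phasor, Real.sin_sub, mul_sum, sum_sub_distrib]

lemma sin_sub_eq_zero_of_phasor_eq {V : Type*} {θ : V → ℝ} {i j : V}
    (h : phasor θ i = phasor θ j) : Real.sin (θ i - θ j) = 0 := by
  have h1 : Real.cos (θ i) = Real.cos (θ j) := congrArg Prod.fst h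
  have h2 : Real.sin (θ i) = Real.sin (θ j) := congrArg Prod.snd h
  rw [Real.sin_sub, h1, h2, mul_comm, sub_self]

lemma Prod.eq_smul_of_cross_eq_zero {v s : ℝ × ℝ} (hv : v.1 ^ 2 + v.2 ^ 2 = 1)
    (hcross : v.2 * s.1 - v.1 * s.2 = 0) : s = (v.1 * s.1 + v.2 * s.2) • v := by
  ext
  · simp only [Prod.smul_fst, smul_eq_mul]; linear_combination (-s.1) * hv + v.2 * hcross
  · simp only [Prod.smul_snd, smul_eq_mul]; linear_combination (-s.2) * hv - v.1 * hcross

theorem stmt_10_general {n : ℕ} (G : SimpleGraph (Fin n)) [DecidableRel G.Adj] (θ : Fin n → ℝ)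
    (hθ : IsSOSP G θ)
    (Q P : Finset (Fin n)) (hQ : Q.Nonempty) (hdisj : Disjoint Q P)
    (hQP : ∀ i ∈ Q, ∀ p ∈ P, G.Adj i p)
    (hQQ : ∀ i ∈ Q, G.neighborFinset i \ P ⊆ Q)
    (v : ℝ × ℝ) (hv : v.1 ^ 2 + v.2 ^ 2 = 1)
    (hsync : ∀ i ∈ Q, phasor θ i = v) :
    (∑ i ∈ P, phasor θ i = 0) ∨ ∃ lam : ℝ, 0 < lam ∧ ∑ i ∈ P, phasor θ i = lam • v := by
  set s := ∑ i ∈ P, phasor θ i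
  set lam := v.1 * s.1 + v.2 * s.2
  obtain ⟨i₀, hi₀⟩ := hQ
  have hcross : v.2 * s.1 - v.1 * s.2 = 0 := by
    have hQ_part : ∑ j ∈ Q, (if G.Adj i₀ j then 1 else 0) * Real.sin (θ i₀ - θ j) = 0 :=
      sum_eq_zero fun j hj => by
        rw [sin_sub_eq_zero_of_phasor_eq ((hsync i₀ hi₀).trans (hsync j hj).symm), mul_zero]
    rw [← hθ.1 i₀, ← sum_add_sum_compl Q, hQ_part, zero_add]
    simp only [boole_mul]
    rw [sum_compl_ite_adj_eq_sum G hdisj (hQP i₀ hi₀) (hQQ i₀ hi₀), sum_sin_sub_phasor,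
      hsync i₀ hi₀]
  have hform : indicatorVec Q ⬝ᵥ (kuramotoHessian G θ *ᵥ indicatorVec Q) = Q.card * lam := by
    rw [kuramotoHessian_eq_weightedLaplacian, indicatorVec_dotProduct_weightedLaplacian_mulVec,
      sum_congr rfl fun i hi => by
        rw [sum_compl_ite_adj_eq_sum G hdisj (hQP i hi) (hQQ i hi), sum_cos_sub_phasor, hsync i hi],
      sum_const, nsmul_eq_mul]
  have hlam : 0 ≤ lam := by
    have hpsd := hθ.2.dotProduct_mulVec_nonneg (indicatorVec Q)
    rw [star_trivial, hform] at hpsd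
    exact nonneg_of_mul_nonneg_right hpsd (Nat.cast_pos.2 (card_pos.2 ⟨i₀, hi₀⟩))
  have hs : s = lam • v := Prod.eq_smul_of_cross_eq_zero hv hcross
  rw [hs]
  rcases hlam.eq_or_lt with h | h
  · left; rw [← h, zero_smul]
  · exact Or.inr ⟨lam, h, rfl⟩

/-- **Synchronous homogeneous extension.** Let `θ` be a second-order stationary point of
the Kuramoto energy, and let `Q, P` be disjoint nonempty vertex subsets such that every
vertex of `Q` is adjacent to every vertex of `P`, and `N(i) \ P ⊆ Q` for every `i ∈ Q`.
If all phasors of `Q` equal a common unit vector `v`, then `Σ_{i ∈ P} v_i` is a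
nonnegative multiple of `v`: either it vanishes or it equals `λ • v` for some `λ > 0`. -/
theorem stmt_10 {n : ℕ} (G : SimpleGraph (Fin n)) [DecidableRel G.Adj] (θ : Fin n → ℝ)
    (hθ : IsSOSP G θ)
    (Q P : Finset (Fin n)) (hQ : Q.Nonempty) (hP : P.Nonempty) (hdisj : Disjoint Q P)
    (hQP : ∀ i ∈ Q, ∀ p ∈ P, G.Adj i p)
    (hQQ : ∀ i ∈ Q, G.neighborFinset i \ P ⊆ Q)
    (v : ℝ × ℝ) (hv : v.1 ^ 2 + v.2 ^ 2 = 1)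
    (hsync : ∀ i ∈ Q, phasor θ i = v) :
    (∑ i ∈ P, phasor θ i = 0) ∨ ∃ lam : ℝ, 0 < lam ∧ ∑ i ∈ P, phasor θ i = lam • v :=
  stmt_10_general G θ hθ Q P hQ hdisj hQP hQQ v hv hsync
end

section
/- Let ≤ be a rooted tree order on a finite vertex set V (a partial order with a greatest element in which the strict upper bounds of every element form a chain), and let G be its comparability graph: distinct u, w are adjacent iff u < w or w < u. Let θ be a second-order stationary point of the Kuramoto energy E_G. Then for every non-maximal vertex A (i.e., a vertex whose set of strict ancestors Anc(A) = {u : A < u} is nonempty), one has v_A + Σ_{j ∈ Anc(A)} v_j ≠ 0, where v_k = (cos θ_k, sin θ_k) is the phasor of vertex k. -/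
open Finset

/-- The comparability graph of a partial order: distinct `u, w` are adjacent iff
`u < w` or `w < u`. -/
def comparabilityGraph (V : Type*) [PartialOrder V] : SimpleGraph V where
  Adj u w := u < w ∨ w < u
  symm := ⟨fun _ _ h => Or.symm h⟩
  loopless := ⟨fun u h => by rcases h with h | h <;> exact lt_irrefl u h⟩

instance {V : Type*} [PartialOrder V] [DecidableRel ((· < ·) : V → V → Prop)] :
    DecidableRel (comparabilityGraph V).Adj :=
  fun u w => inferInstanceAs (Decidable (u < w ∨ w < u))

/-!
If `v_A + Σ_{j ∈ Anc A} v_j = 0`, then `Σ_{j ∈ Anc A} cos (x - θ_j) = -cos (x - θ_A)` for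
every `x`.
The Hessian is the Laplacian of the graph weighted by `cos (θ_i - θ_k)`, so positive
semidefiniteness makes every cut weight `Σ_{i ∈ S, k ∉ S} A_{ik} cos (θ_i - θ_k)` nonnegative.
In a tree order the neighbours of the down-set `D = {v ≤ A}` outside `D` are exactly the
ancestors of `A`, and the neighbours of `A` are its ancestors and its strict descendants. Hence
the cuts of `D` and of `{A}` weigh `-1 - Σ_{v < A} cos (θ_v - θ_A)` and
`-1 + Σ_{v < A} cos (θ_v - θ_A)`, which add up to `-2`.
-/

theorem Matrix.PosSemidef.sum_sum_nonneg {n R : Type*} [Fintype n] [Ring R] [PartialOrder R]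
    [StarRing R] {M : Matrix n n R} (hM : M.PosSemidef) (S : Finset n) :
    0 ≤ ∑ i ∈ S, ∑ j ∈ S, M i j := by
  classical
  simpa [dotProduct, Matrix.mulVec, apply_ite star, ← sum_filter] using
    hM.dotProduct_mulVec_nonneg fun i => if i ∈ S then 1 else 0

section Kuramoto

variable {V : Type*} [Fintype V] [DecidableEq V] (G : SimpleGraph V) [DecidableRel G.Adj]
  (θ : V → ℝ)

theorem kuramotoHessian_apply (i j : V) :
    kuramotoHessian G θ i j =
      (if i = j then ∑ k, (if G.Adj i k then Real.cos (θ i - θ k) else 0) else 0)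
        - if G.Adj i j then Real.cos (θ i - θ j) else 0 := by
  by_cases hij : i = j
  · subst hij
    simp [kuramotoHessian]
  · simp [kuramotoHessian, hij]

theorem sum_kuramotoHessian_of_mem {S : Finset V} {i : V} (hi : i ∈ S) :
    ∑ j ∈ S, kuramotoHessian G θ i j =
      ∑ k ∈ Sᶜ, if G.Adj i k then Real.cos (θ i - θ k) else 0 := by
  simp only [kuramotoHessian_apply, sum_sub_distrib, sum_ite_eq, if_pos hi]
  rw [← sum_compl_add_sum S]
  ring

variable {G θ}

theorem IsSOSP.sum_cut_nonneg (hθ : IsSOSP G θ) (S : Finset V) :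
    0 ≤ ∑ i ∈ S, ∑ k ∈ Sᶜ, if G.Adj i k then Real.cos (θ i - θ k) else 0 := by
  rw [← sum_congr rfl fun i hi => sum_kuramotoHessian_of_mem G θ hi]
  exact hθ.2.sum_sum_nonneg S

end Kuramoto

theorem sum_cos_sub_eq_neg_of_phasor_add_sum_eq_zero {ι : Type*} {θ : ι → ℝ} {a : ι}
    {s : Finset ι} (h : phasor θ a + ∑ j ∈ s, phasor θ j = 0) (x : ℝ) :
    ∑ j ∈ s, Real.cos (x - θ j) = -Real.cos (x - θ a) := by
  have hcos : ∑ j ∈ s, Real.cos (θ j) = -Real.cos (θ a) := by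
    simpa [phasor, Prod.fst_sum, eq_neg_iff_add_eq_zero, add_comm] using congrArg Prod.fst h
  have hsin : ∑ j ∈ s, Real.sin (θ j) = -Real.sin (θ a) := by
    simpa [phasor, Prod.snd_sum, eq_neg_iff_add_eq_zero, add_comm] using congrArg Prod.snd h
  simp only [Real.cos_sub, sum_add_distrib, ← mul_sum, hcos, hsin]
  ring

theorem comparabilityGraph_adj_iff_of_le_of_not_le {V : Type*} [PartialOrder V]
    (hchain : ∀ v : V, IsChain (· ≤ ·) {u : V | v < u}) {a i k : V} (hi : i ≤ a)
    (hk : ¬k ≤ a) : (comparabilityGraph V).Adj i k ↔ a < k := by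
  refine ⟨?_, fun hak => Or.inl (hi.trans_lt hak)⟩
  rintro (hik | hki)
  · obtain rfl | hia := hi.eq_or_lt
    · exact hik
    · have hak : a ≠ k := fun h => hk h.ge
      exact ((hchain i hia hik hak).resolve_right hk).lt_of_ne hak
  · exact absurd (hki.le.trans hi) hk

section TreeOrder

variable {V : Type*} [Fintype V] [DecidableEq V] [PartialOrder V]
  [DecidableRel ((· < ·) : V → V → Prop)]

theorem sum_compl_filter_le_adj_eq_sum_filter_gt [DecidableRel ((· ≤ ·) : V → V → Prop)]
    (hchain : ∀ v : V, IsChain (· ≤ ·) {u : V | v < u}) {a i : V} (hi : i ≤ a) (f : V → ℝ) :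
    ∑ k ∈ (univ.filter (· ≤ a))ᶜ, (if (comparabilityGraph V).Adj i k then f k else 0) =
      ∑ k ∈ univ.filter (a < ·), f k := by
  rw [← sum_filter]
  refine sum_congr ?_ fun _ _ => rfl
  ext k
  simp only [compl_filter, mem_filter, mem_univ, true_and]
  constructor
  · rintro ⟨hk, hadj⟩
    exact (comparabilityGraph_adj_iff_of_le_of_not_le hchain hi hk).1 hadj
  · intro hak
    have hk : ¬k ≤ a := hak.not_ge
    exact ⟨hk, (comparabilityGraph_adj_iff_of_le_of_not_le hchain hi hk).2 hak⟩

theorem sum_compl_singleton_adj_eq_add (a : V) (f : V → ℝ) :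
    ∑ k ∈ {a}ᶜ, (if (comparabilityGraph V).Adj a k then f k else 0) =
      ∑ k ∈ univ.filter (a < ·), f k + ∑ k ∈ univ.filter (· < a), f k := by
  rw [← sum_union (disjoint_filter.2 fun k _ hak hka => hak.asymm hka), ← sum_filter]
  refine sum_congr ?_ fun _ _ => rfl
  ext k
  simp only [mem_filter, mem_compl, mem_singleton, mem_union, mem_univ, true_and]
  constructor
  · exact fun h => h.2
  · rintro (h | h)
    · exact ⟨h.ne', Or.inl h⟩
    · exact ⟨h.ne, Or.inr h⟩

theorem sum_filter_le_eq_add_sum_filter_lt [DecidableRel ((· ≤ ·) : V → V → Prop)] (a : V)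
    (f : V → ℝ) :
    ∑ k ∈ univ.filter (· ≤ a), f k = f a + ∑ k ∈ univ.filter (· < a), f k := by
  rw [← add_sum_erase _ _ (by simp : a ∈ univ.filter (· ≤ a))]
  congr 2
  ext k
  simp [lt_iff_le_and_ne, and_comm]

end TreeOrder

theorem stmt_11_general {V : Type*} [Fintype V] [DecidableEq V] [PartialOrder V]
    [DecidableRel ((· < ·) : V → V → Prop)]
    (hchain : ∀ v : V, IsChain (· ≤ ·) {u : V | v < u})
    (θ : V → ℝ) (hθ : IsSOSP (comparabilityGraph V) θ)
    (A : V) :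
    phasor θ A + ∑ j ∈ Finset.univ.filter (fun u => A < u), phasor θ j ≠ 0 := by
  classical
  intro h
  have hanc := sum_cos_sub_eq_neg_of_phasor_add_sum_eq_zero h
  have hvertex := hθ.sum_cut_nonneg {A}
  rw [sum_singleton, sum_compl_singleton_adj_eq_add, hanc] at hvertex
  have hdown := hθ.sum_cut_nonneg (univ.filter (· ≤ A))
  rw [sum_congr rfl fun i hi =>
    sum_compl_filter_le_adj_eq_sum_filter_gt hchain (mem_filter.1 hi).2 _] at hdown
  simp only [hanc, sum_filter_le_eq_add_sum_filter_lt A, sub_self, Real.cos_zero,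
    sum_neg_distrib] at hdown hvertex
  simp only [← Real.cos_neg (θ A - _), neg_sub] at hvertex
  linarith

/-- On the comparability graph of a rooted tree order (a partial order with a greatest
element whose sets of strict upper bounds are chains), at a second-order stationary point
`θ` of the Kuramoto energy, for every non-maximal vertex `A` one has
`v_A + Σ_{j ∈ Anc(A)} v_j ≠ 0`. -/
theorem stmt_11 {V : Type*} [Fintype V] [DecidableEq V] [PartialOrder V]
    [DecidableRel ((· < ·) : V → V → Prop)]
    (hroot : ∃ r : V, ∀ v : V, v ≤ r)
    (hchain : ∀ v : V, IsChain (· ≤ ·) {u : V | v < u})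
    (θ : V → ℝ) (hθ : IsSOSP (comparabilityGraph V) θ)
    (A : V) (hA : {u : V | A < u}.Nonempty) :
    phasor θ A + ∑ j ∈ Finset.univ.filter (fun u => A < u), phasor θ j ≠ 0 :=
  stmt_11_general hchain θ hθ A
end
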